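/- arXiv:1902.01507 — 2 statements merged into one kernel-verified Lean document; each statement's English description precedes it below -/
import Mathlib

section
/- Let 𝒪 be a commutative ring, let f, g ∈ 𝒪 be such that the principal ideal (f) is a prime ideal and g ∉ (f), and let h ∈ 𝒪 be arbitrary. Then the sequence 0 → 𝒪/(f, h) → 𝒪/(f, gh) → 𝒪/(f, g) → 0 is exact, where the first map is induced by multiplication by g and the second map is the natural surjection. -/
open Ideal

/-- Multiplication by `g` induces a well-defined `𝒪`-module map `𝒪/(f,h) → 𝒪/(f,gh)`,
since `g·(f,h) ⊆ (f,gh)`. -/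
noncomputable def mulQMap {O : Type*} [CommRing O] (f g h : O) :
    (O ⧸ Ideal.span {f, h}) →ₗ[O] O ⧸ Ideal.span {f, g * h} :=
  Submodule.mapQ (Ideal.span {f, h}) (Ideal.span {f, g * h}) (LinearMap.lsmul O O g)
    (by
      rw [Ideal.span_le]
      rintro x hx
      simp only [Set.mem_insert_iff, Set.mem_singleton_iff] at hx
      simp only [SetLike.mem_coe, Submodule.mem_comap, LinearMap.lsmul_apply, smul_eq_mul]
      rcases hx with rfl | rfl
      · exact Ideal.mul_mem_left _ g (Ideal.subset_span (Set.mem_insert _ _))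
      · exact Ideal.subset_span (Set.mem_insert_of_mem _ rfl))

/-- The natural surjection `𝒪/(f,gh) → 𝒪/(f,g)`. -/
noncomputable def projQMap {O : Type*} [CommRing O] (f g h : O) :
    (O ⧸ Ideal.span {f, g * h}) → O ⧸ Ideal.span {f, g} :=
  Ideal.Quotient.factor (S := Ideal.span {f, g * h}) (T := Ideal.span {f, g})
    (by
      rw [Ideal.span_le]
      rintro x hx
      simp only [Set.mem_insert_iff, Set.mem_singleton_iff] at hx
      rcases hx with rfl | rfl
      · exact Ideal.subset_span (Set.mem_insert _ _)
      · exact Ideal.mul_mem_right h _ (Ideal.subset_span (Set.mem_insert_of_mem _ rfl)))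

/-! Exactness in the middle and surjectivity hold for arbitrary `f g h`: the kernel of the
projection `(f, g)/(f, gh)` is visibly the image of multiplication by `g`. Primality is needed only
for injectivity: if `g x = a f + b g h`, then `g (x - b h) ∈ (f)`, so `x - b h ∈ (f)` because
`g ∉ (f)`, i.e. `x ∈ (f, h)`. -/

section

variable {O : Type*} [CommRing O] (f g h : O)

@[simp]
theorem mulQMap_mk (x : O) :
    mulQMap f g h (Ideal.Quotient.mk _ x) = Ideal.Quotient.mk _ (g * x) :=
  rfl

@[simp]
theorem projQMap_mk (x : O) : projQMap f g h (Ideal.Quotient.mk _ x) = Ideal.Quotient.mk _ x :=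
  Ideal.Quotient.factor_mk _ _

theorem projQMap_surjective : Function.Surjective (projQMap f g h) :=
  Ideal.Quotient.factor_surjective _

theorem mem_span_pair_of_mul_mem {f g h : O} (hfg : ∀ y, g * y ∈ span {f} → y ∈ span {f})
    {x : O} (hx : g * x ∈ span {f, g * h}) : x ∈ span {f, h} := by
  obtain ⟨a, b, hab⟩ := mem_span_pair.mp hx
  obtain ⟨c, hc⟩ : f ∣ x - b * h :=
    mem_span_singleton.mp <| hfg _ <| mem_span_singleton.mpr ⟨a, by linear_combination -hab⟩
  exact mem_span_pair.mpr ⟨c, b, by linear_combination -hc⟩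

theorem mulQMap_injective (hfg : ∀ y, g * y ∈ span {f} → y ∈ span {f}) :
    Function.Injective (mulQMap f g h) := by
  rw [← LinearMap.ker_eq_bot, LinearMap.ker_eq_bot']
  intro m hm
  obtain ⟨x, rfl⟩ := Ideal.Quotient.mk_surjective m
  rw [mulQMap_mk, Ideal.Quotient.eq_zero_iff_mem] at hm
  exact Ideal.Quotient.eq_zero_iff_mem.mpr (mem_span_pair_of_mul_mem hfg hm)

theorem mk_mem_range_mulQMap_iff (x : O) :
    Ideal.Quotient.mk _ x ∈ Set.range (mulQMap f g h) ↔ x ∈ span {f, g} := by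
  constructor
  · rintro ⟨m, hm⟩
    obtain ⟨z, rfl⟩ := Ideal.Quotient.mk_surjective m
    rw [mulQMap_mk, Ideal.Quotient.mk_eq_mk_iff_sub_mem, mem_span_pair] at hm
    obtain ⟨a, b, hab⟩ := hm
    exact mem_span_pair.mpr ⟨-a, z - b * h, by linear_combination -hab⟩
  · intro hx
    obtain ⟨a, b, hab⟩ := mem_span_pair.mp hx
    refine ⟨Ideal.Quotient.mk _ b, ?_⟩
    rw [mulQMap_mk, Ideal.Quotient.mk_eq_mk_iff_sub_mem, mem_span_pair]
    exact ⟨-a, 0, by linear_combination -hab⟩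

theorem exact_mulQMap_projQMap : Function.Exact (mulQMap f g h) (projQMap f g h) := by
  intro y
  obtain ⟨x, rfl⟩ := Ideal.Quotient.mk_surjective y
  rw [projQMap_mk, Ideal.Quotient.eq_zero_iff_mem, mk_mem_range_mulQMap_iff]

end

/-- Lemma 1.5, case (ii): for `𝒪` a commutative ring, `(f)` a prime ideal, `g ∉ (f)` and `h` arbitrary, the
sequence `0 → 𝒪/(f,h) → 𝒪/(f,gh) → 𝒪/(f,g) → 0` is exact, the first map being
multiplication by `g` and the second the natural surjection. -/
theorem exact_mul_quotient_seq_of_span_isPrime {O : Type*} [CommRing O]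
    (f g h : O) (hf : (Ideal.span {f}).IsPrime) (hg : g ∉ Ideal.span {f}) :
    Function.Injective (mulQMap f g h) ∧
    Function.Exact (mulQMap f g h) (projQMap f g h) ∧
    Function.Surjective (projQMap f g h) :=
  ⟨mulQMap_injective f g h fun _ hy ↦ (hf.mem_or_mem hy).resolve_left hg,
    exact_mulQMap_projQMap f g h, projQMap_surjective f g h⟩
end

section
/- Let d ≥ 1 be an integer, p a prime, and k ≥ 1 an integer. Then the quotient ring R_{d, p^k d} = ℤ[X]/(Φ_d, Φ_{p^k d}) is a finite ring of cardinality p^{φ(d)}, where φ is the Euler totient function (equivalently, the resultant of Φ_d and Φ_{p^k d} equals p^{φ(d)} up to sign). -/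
/-!
Modulo `p`, `Φ_{pn}` is a positive power of `Φ_n`, so `Φ_d ∣ Φ_{pᵏd}` over `𝔽_p` and the ideal
`(Φ_d, Φ_{pᵏd})` is contained in `(Φ_d, p)`. Conversely, with `m = pᵏ⁻¹d`, the polynomial
`Φ_{pm}` divides `(X^{pm} - 1)/(X^m - 1) = ∑_{i<p} X^{mi}`, which is `≡ p` modulo `Φ_d` because
`X^m ≡ 1`; so `p` lies in the ideal. Hence the quotient is `𝔽_p[X]/(Φ_d)`, of order `p^{φ(d)}`.
-/

open Polynomial

namespace Polynomial

theorem cyclotomic_dvd_cyclotomic_mul_prime (R : Type*) [Ring R] (p n : ℕ) [Fact p.Prime]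
    [CharP R p] : cyclotomic n R ∣ cyclotomic (n * p) R := by
  have hp : p.Prime := Fact.out
  by_cases hpn : p ∣ n
  · rw [cyclotomic_mul_prime_dvd_eq_pow R hpn]
    exact dvd_pow_self _ hp.ne_zero
  · rw [cyclotomic_mul_prime_eq_pow_of_not_dvd R hpn]
    exact dvd_pow_self _ (Nat.sub_ne_zero_of_lt hp.one_lt)

theorem cyclotomic_dvd_cyclotomic_prime_pow_mul (R : Type*) [Ring R] (p k n : ℕ) [Fact p.Prime]
    [CharP R p] : cyclotomic n R ∣ cyclotomic (p ^ k * n) R := by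
  induction k with
  | zero => simp
  | succ k ih =>
    rw [pow_succ, mul_right_comm]
    exact ih.trans (cyclotomic_dvd_cyclotomic_mul_prime R p _)

theorem cyclotomic_mul_dvd_geom_sum (R : Type*) [CommRing R] {p : ℕ} (hp : p ≠ 1) (m : ℕ) :
    cyclotomic (p * m) R ∣ ∑ i ∈ Finset.range p, (X ^ m) ^ i := by
  rcases m.eq_zero_or_pos with rfl | hm
  · simp
  rcases p.eq_zero_or_pos with rfl | hp0
  · simp
  have hmem : m ∈ (p * m).properDivisors :=
    Nat.mem_properDivisors.mpr ⟨dvd_mul_left m p, lt_mul_left hm (by omega)⟩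
  obtain ⟨q, hq⟩ := X_pow_sub_one_mul_cyclotomic_dvd_X_pow_sub_one_of_dvd R hmem
  refine ⟨q, (monic_X_pow_sub_C (1 : R) hm.ne').isRegular.left ?_⟩
  simp only [C_1]
  rw [← mul_assoc, ← hq, mul_comm, geom_sum_mul, ← pow_mul, mul_comm]

theorem natCast_mem_span_cyclotomic (R : Type*) [CommRing R] {p d m : ℕ} (hp : p ≠ 1)
    (hdm : d ∣ m) : (p : R[X]) ∈ Ideal.span {cyclotomic d R, cyclotomic (p * m) R} := by
  set I := Ideal.span {cyclotomic d R, cyclotomic (p * m) R}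
  have hXm : Ideal.Quotient.mk I (X ^ m) = 1 := by
    obtain ⟨c, rfl⟩ := hdm
    have hdvd : cyclotomic d R ∣ X ^ (d * c) - 1 :=
      (cyclotomic.dvd_X_pow_sub_one d R).trans
        (by simpa only [pow_mul] using sub_one_dvd_pow_sub_one (X ^ d : R[X]) c)
    rw [← sub_eq_zero, ← map_one (Ideal.Quotient.mk I), ← map_sub, Ideal.Quotient.eq_zero_iff_mem]
    exact I.mem_of_dvd hdvd (Ideal.subset_span (by simp))
  have hsum : ∑ i ∈ Finset.range p, (X ^ m) ^ i ∈ I :=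
    I.mem_of_dvd (cyclotomic_mul_dvd_geom_sum R hp m) (Ideal.subset_span (by simp))
  rw [← Ideal.Quotient.eq_zero_iff_mem] at hsum ⊢
  simpa [map_sum, hXm] using hsum

theorem ker_adjoinRootMk_comp_mapRingHom {R S : Type*} [CommRing R] [CommRing S] {g : R →+* S}
    (hg : Function.Surjective g) (f : R[X]) :
    RingHom.ker ((AdjoinRoot.mk (f.map g)).comp (mapRingHom g)) =
      Ideal.span {f} ⊔ (RingHom.ker g).map C := by
  have hker : RingHom.ker (AdjoinRoot.mk (f.map g)) = Ideal.span {f.map g} :=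
    Ideal.ext fun _ => by rw [RingHom.mem_ker, AdjoinRoot.mk_eq_zero, Ideal.mem_span_singleton]
  rw [← RingHom.comap_ker, hker, ← coe_mapRingHom, ← Set.image_singleton,
    ← Ideal.map_span, Ideal.comap_map_of_surjective' _ (map_surjective _ hg), ker_mapRingHom]

end Polynomial

theorem AdjoinRoot.natCard_eq_pow_natDegree {R : Type*} [CommRing R] {f : R[X]} (hf : f.Monic) :
    Nat.card (AdjoinRoot f) = Nat.card R ^ f.natDegree := by
  rw [Nat.card_congr (AdjoinRoot.powerBasisAux' hf).equivFun.toEquiv, Nat.card_fun, Nat.card_fin]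

theorem ker_adjoinRootMk_comp_mapRingHom_cyclotomic (d p k : ℕ) [Fact p.Prime] (hk : 1 ≤ k) :
    RingHom.ker ((AdjoinRoot.mk ((cyclotomic d ℤ).map (Int.castRingHom (ZMod p)))).comp
      (mapRingHom (Int.castRingHom (ZMod p)))) =
      Ideal.span {cyclotomic d ℤ, cyclotomic (p ^ k * d) ℤ} := by
  have hp_mem : (p : ℤ[X]) ∈ Ideal.span {cyclotomic d ℤ, cyclotomic (p ^ k * d) ℤ} := by
    obtain ⟨j, rfl⟩ := Nat.exists_eq_add_of_le' hk
    rw [pow_succ', mul_assoc]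
    exact natCast_mem_span_cyclotomic ℤ (Fact.out : p.Prime).ne_one (dvd_mul_left d _)
  refine le_antisymm ?_ (Ideal.span_le.mpr ?_)
  · rw [ker_adjoinRootMk_comp_mapRingHom ZMod.intCast_surjective, ZMod.ker_intCastRingHom,
      Ideal.map_span, Set.image_singleton, sup_le_iff, Ideal.span_singleton_le_iff_mem,
      Ideal.span_singleton_le_iff_mem]
    exact ⟨Ideal.subset_span (by simp), by simpa using hp_mem⟩
  · rintro f (rfl | rfl) <;>
      simp [AdjoinRoot.mk_eq_zero, cyclotomic_dvd_cyclotomic_prime_pow_mul]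

theorem card_quotient_span_cyclotomic_general (d p k : ℕ) (hp : p.Prime)
    (hk : 1 ≤ k) :
    Finite (Polynomial ℤ ⧸ Ideal.span {cyclotomic d ℤ, cyclotomic (p ^ k * d) ℤ}) ∧
    Nat.card (Polynomial ℤ ⧸ Ideal.span {cyclotomic d ℤ, cyclotomic (p ^ k * d) ℤ}) =
      p ^ Nat.totient d := by
  have : Fact p.Prime := ⟨hp⟩
  have hsurj : Function.Surjective ((AdjoinRoot.mk ((cyclotomic d ℤ).map
      (Int.castRingHom (ZMod p)))).comp (mapRingHom (Int.castRingHom (ZMod p)))) :=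
    AdjoinRoot.mk_surjective.comp (map_surjective _ ZMod.intCast_surjective)
  have hcard := Nat.card_congr
    ((Ideal.quotEquivOfEq (ker_adjoinRootMk_comp_mapRingHom_cyclotomic d p k hk)).symm.trans
      (RingHom.quotientKerEquivOfSurjective hsurj)).toEquiv
  rw [map_cyclotomic_int, AdjoinRoot.natCard_eq_pow_natDegree (cyclotomic.monic d (ZMod p)),
    Nat.card_zmod, natDegree_cyclotomic] at hcard
  exact ⟨Nat.finite_of_card_ne_zero (hcard ▸ pow_ne_zero _ hp.ne_zero), hcard⟩

/-- Part of Theorem 2.3: for `d ≥ 1`, `p` prime and `k ≥ 1`, the ring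
`R_{d, pᵏd} = ℤ[X]/(Φ_d, Φ_{pᵏd})` is finite of cardinality `p^{φ(d)}`. -/
theorem card_quotient_span_cyclotomic (d p k : ℕ) (hd : 1 ≤ d) (hp : p.Prime)
    (hk : 1 ≤ k) :
    Finite (Polynomial ℤ ⧸ Ideal.span {cyclotomic d ℤ, cyclotomic (p ^ k * d) ℤ}) ∧
    Nat.card (Polynomial ℤ ⧸ Ideal.span {cyclotomic d ℤ, cyclotomic (p ^ k * d) ℤ}) =
      p ^ Nat.totient d :=
  card_quotient_span_cyclotomic_general d p k hp hk
end
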